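/- arXiv:math/0507002 — 5 statements merged into one kernel-verified Lean document; each statement's English description precedes it below -/
import Mathlib

section
/- (Solution 1A of Table 1.) Let a, b ∈ ℂ with a ≠ 0 and b ≠ 0. Let U ⊆ ℂ be a nonempty open set and λ : U → ℂ a twice differentiable function such that for every t ∈ U one has t ∉ {0,1}, λ(t) ∉ {0,1,t}, and a·λ(t)² − b·t = 0. Then λ is a solution of PVI_α with α = (a, b, 1/8, 1/8). -/
/-!
Differentiating `a λ² = b t` gives `2 a λ λ' = b`, hence `λ' = λ / (2t)` on `U`, and differentiating
once more gives `λ'' = -λ / (4t²)`. Since `α₀ - α₁ t / λ² = (a λ² - b t) / λ² = 0`, what remains of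
the Painlevé VI equation is a rational identity in `λ` and `t`.
-/

/-- `l : ℂ → ℂ` (viewed as a function on `U`) is a solution of the Painlevé VI equation
`PVI_α` with parameter `α = (α₀, α₁, α₂, α₃)`:  `l` is twice differentiable on `U`, for every
`t ∈ U` one has `t ∉ {0,1}`, `l t ∉ {0,1,t}`, and the Painlevé VI ODE holds on `U`. -/
def IsPVISolution (α : Fin 4 → ℂ) (U : Set ℂ) (l : ℂ → ℂ) : Prop :=
  (∀ t ∈ U, DifferentiableAt ℂ l t) ∧
  (∀ t ∈ U, DifferentiableAt ℂ (deriv l) t) ∧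
  (∀ t ∈ U, t ≠ 0 ∧ t ≠ 1 ∧ l t ≠ 0 ∧ l t ≠ 1 ∧ l t ≠ t) ∧
  (∀ t ∈ U, deriv (deriv l) t =
    (1 / 2) * (1 / l t + 1 / (l t - 1) + 1 / (l t - t)) * (deriv l t) ^ 2
      - (1 / t + 1 / (t - 1) + 1 / (l t - t)) * deriv l t
      + (l t * (l t - 1) * (l t - t)) / (t ^ 2 * (t - 1) ^ 2) *
        (α 0 - α 1 * t / (l t) ^ 2 + α 2 * (t - 1) / (l t - 1) ^ 2
          + (1 / 2 - α 3) * (t * (t - 1)) / (l t - t) ^ 2))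

theorem deriv_eq_div_two_mul_of_mul_sq_eq {a b s : ℂ} {l : ℂ → ℂ} (ha : a ≠ 0)
    (hl : DifferentiableAt ℂ l s) (hls : l s ≠ 0)
    (h : ∀ᶠ x in nhds s, a * l x ^ 2 = b * x) :
    deriv l s = l s / (2 * s) := by
  have hderiv : a * (2 * l s * deriv l s) = b := by
    have hF := ((hl.hasDerivAt.pow 2).const_mul a).unique
      (((hasDerivAt_id s).const_mul b).congr_of_eventuallyEq (h.mono fun x hx => by simpa using hx))
    simpa using hF
  have hs : a * l s ^ 2 = b * s := h.self_of_nhds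
  have hmul : a * l s * (deriv l s * (2 * s) - l s) = 0 := by
    linear_combination s * hderiv - hs
  have hs0 : s ≠ 0 := by
    rintro rfl
    simp [ha, hls] at hs
  rw [eq_div_iff (mul_ne_zero two_ne_zero hs0)]
  linear_combination (mul_eq_zero.mp hmul).resolve_left (mul_ne_zero ha hls)

theorem hasDerivAt_deriv_of_eventuallyEq_div_two_mul {l : ℂ → ℂ} {t : ℂ} (ht : t ≠ 0)
    (hl : DifferentiableAt ℂ l t) (h : deriv l =ᶠ[nhds t] fun x => l x / (2 * x)) :
    HasDerivAt (deriv l) (-l t / (4 * t ^ 2)) t := by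
  have hG := hl.hasDerivAt.div ((hasDerivAt_id' t).const_mul (2 : ℂ)) (mul_ne_zero two_ne_zero ht)
  refine (hG.congr_of_eventuallyEq h).congr_deriv ?_
  rw [h.self_of_nhds]
  field_simp
  ring

theorem neg_div_four_mul_sq_eq_painleveVI_rhs (a b l t : ℂ) (ht0 : t ≠ 0) (ht1 : t ≠ 1)
    (hl0 : l ≠ 0) (hl1 : l ≠ 1) (hlt : l ≠ t) (h : a * l ^ 2 = b * t) :
    -l / (4 * t ^ 2) =
    (1 / 2) * (1 / l + 1 / (l - 1) + 1 / (l - t)) * (l / (2 * t)) ^ 2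
      - (1 / t + 1 / (t - 1) + 1 / (l - t)) * (l / (2 * t))
      + (l * (l - 1) * (l - t)) / (t ^ 2 * (t - 1) ^ 2) *
        (a - b * t / l ^ 2 + 1 / 8 * (t - 1) / (l - 1) ^ 2
          + (1 / 2 - 1 / 8) * (t * (t - 1)) / (l - t) ^ 2) := by
  have hl1' : l - 1 ≠ 0 := sub_ne_zero.mpr hl1
  have hlt' : l - t ≠ 0 := sub_ne_zero.mpr hlt
  have ht1' : t - 1 ≠ 0 := sub_ne_zero.mpr ht1
  have hab : a - b * t / l ^ 2 = 0 := by
    rw [sub_eq_zero, eq_div_iff (pow_ne_zero 2 hl0), h]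
  rw [hab]
  field_simp
  ring

theorem stmt2_general (a b : ℂ) (ha : a ≠ 0)
    (U : Set ℂ) (hUopen : IsOpen U) (l : ℂ → ℂ)
    (hdiff : ∀ t ∈ U, DifferentiableAt ℂ l t)
    (hreg : ∀ t ∈ U, t ≠ 0 ∧ t ≠ 1 ∧ l t ≠ 0 ∧ l t ≠ 1 ∧ l t ≠ t)
    (heq : ∀ t ∈ U, a * (l t) ^ 2 - b * t = 0) :
    IsPVISolution ![a, b, 1 / 8, 1 / 8] U l := by
  have hderiv : ∀ s ∈ U, deriv l s = l s / (2 * s) := fun s hs =>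
    deriv_eq_div_two_mul_of_mul_sq_eq ha (hdiff s hs) (hreg s hs).2.2.1 <|
      Filter.eventually_of_mem (hUopen.mem_nhds hs) fun x hx => sub_eq_zero.mp (heq x hx)
  have hderiv2 : ∀ t ∈ U, HasDerivAt (deriv l) (-l t / (4 * t ^ 2)) t := fun t ht =>
    hasDerivAt_deriv_of_eventuallyEq_div_two_mul (hreg t ht).1 (hdiff t ht)
      (Filter.eventually_of_mem (hUopen.mem_nhds ht) hderiv)
  refine ⟨hdiff, fun t ht => (hderiv2 t ht).differentiableAt, hreg, fun t ht => ?_⟩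
  obtain ⟨ht0, ht1, hl0, hl1, hlt⟩ := hreg t ht
  rw [(hderiv2 t ht).deriv, hderiv t ht]
  exact neg_div_four_mul_sq_eq_painleveVI_rhs a b (l t) t ht0 ht1 hl0 hl1 hlt
    (sub_eq_zero.mp (heq t ht))

theorem stmt2 (a b : ℂ) (ha : a ≠ 0) (hb : b ≠ 0)
    (U : Set ℂ) (hU : U.Nonempty) (hUopen : IsOpen U) (l : ℂ → ℂ)
    (hdiff : ∀ t ∈ U, DifferentiableAt ℂ l t)
    (hdiff2 : ∀ t ∈ U, DifferentiableAt ℂ (deriv l) t)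
    (hreg : ∀ t ∈ U, t ≠ 0 ∧ t ≠ 1 ∧ l t ≠ 0 ∧ l t ≠ 1 ∧ l t ≠ t)
    (heq : ∀ t ∈ U, a * (l t) ^ 2 - b * t = 0) :
    IsPVISolution ![a, b, 1 / 8, 1 / 8] U l :=
  stmt2_general a b ha U hUopen l hdiff hreg heq
end

section
/- (Solution 2A of Table 1.) Let a, b ∈ ℂ. Let U ⊆ ℂ be a nonempty open set and λ : U → ℂ a twice differentiable function such that for every t ∈ U one has t ∉ {0,1}, λ(t) ∉ {0,1,t}, and λ(t)² − t = 0. Then λ is a solution of PVI_α with α = (a, a, b, b). -/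
theorem stmt3 (a b : ℂ)
    (U : Set ℂ) (hU : U.Nonempty) (hUopen : IsOpen U) (l : ℂ → ℂ)
    (hdiff : ∀ t ∈ U, DifferentiableAt ℂ l t)
    (hdiff2 : ∀ t ∈ U, DifferentiableAt ℂ (deriv l) t)
    (hreg : ∀ t ∈ U, t ≠ 0 ∧ t ≠ 1 ∧ l t ≠ 0 ∧ l t ≠ 1 ∧ l t ≠ t)
    (heq : ∀ t ∈ U, (l t) ^ 2 - t = 0) :
    IsPVISolution ![a, a, b, b] U l := by
  -- first derivative relation: 2 * l t * deriv l t - 1 = 0 on U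
  have h1 : ∀ t ∈ U, 2 * l t * deriv l t - 1 = 0 := by
    intro t ht
    have hev : (fun s => (l s) ^ 2 - s) =ᶠ[nhds t] (fun _ => (0 : ℂ)) :=
      Filter.eventually_of_mem (hUopen.mem_nhds ht) heq
    have hd : HasDerivAt (fun s => (l s) ^ 2 - s)
        (2 * l t * deriv l t - 1) t := by
      have h := ((hdiff t ht).hasDerivAt.pow 2).sub (hasDerivAt_id t)
      have h' : HasDerivAt (fun s => (l s) ^ 2 - s) (↑2 * l t ^ (2 - 1) * deriv l t - 1) t := h
      simpa [pow_one, mul_comm, mul_assoc, mul_left_comm] using h'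
    have := hd.deriv
    rw [hev.deriv_eq] at this
    simp at this
    rw [← this]
  have h2 : ∀ t ∈ U, 2 * (deriv l t) ^ 2 + 2 * l t * deriv (deriv l) t = 0 := by
    intro t ht
    have hev : (fun s => 2 * l s * deriv l s - 1) =ᶠ[nhds t] (fun _ => (0 : ℂ)) :=
      Filter.eventually_of_mem (hUopen.mem_nhds ht) h1
    have hd : HasDerivAt (fun s => 2 * l s * deriv l s - 1)
        (2 * (deriv l t) ^ 2 + 2 * l t * deriv (deriv l) t) t := by
      have h := ((((hdiff t ht).hasDerivAt).const_mul 2).mul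
        (hdiff2 t ht).hasDerivAt).sub_const 1
      have h' : HasDerivAt (fun s => 2 * l s * deriv l s - 1)
          (2 * deriv l t * deriv l t + 2 * l t * deriv (deriv l) t) t := h
      convert h' using 1
      ring
    have := hd.deriv
    rw [hev.deriv_eq] at this
    simp at this
    rw [← this]
  refine ⟨hdiff, hdiff2, hreg, ?_⟩
  intro t ht
  obtain ⟨ht0, ht1, hl0, hl1, hlt⟩ := hreg t ht
  set x := l t with hx
  set d := deriv l t with hd
  set dd := deriv (deriv l) t with hdd
  have hx2 : x ^ 2 = t := by have := heq t ht; linear_combination this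
  have e1 : 2 * x * d = 1 := by have := h1 t ht; linear_combination this
  have e2 : 2 * d ^ 2 + 2 * x * dd = 0 := h2 t ht
  -- nonvanishing
  have hxm1 : x - 1 ≠ 0 := sub_ne_zero.mpr hl1
  have hxp1 : x + 1 ≠ 0 := by
    intro h
    apply ht1
    have hxeq : x = -1 := by linear_combination h
    rw [← hx2, hxeq]; norm_num
  have hxt : x - t ≠ 0 := sub_ne_zero.mpr hlt
  have hm0 : ![a, a, b, b] 0 = a := rfl
  have hm1 : ![a, a, b, b] 1 = a := rfl
  have hm2 : ![a, a, b, b] 2 = b := rfl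
  have hm3 : ![a, a, b, b] 3 = b := rfl
  rw [hm0, hm1, hm2, hm3]
  rw [← hx2] at ht0 ht1 hxt ⊢
  have ht0' : x ≠ 0 := hl0
  have ht1' : x ^ 2 - 1 ≠ 0 := sub_ne_zero.mpr ht1
  have hxt' : x - x ^ 2 ≠ 0 := hxt
  have hdval : d = 1 / (2 * x) := by
    field_simp
    linear_combination e1
  have hddval : dd = -(1 / (4 * x ^ 3)) := by
    field_simp
    linear_combination 2 * x ^ 2 * e2 - (2 * x * d + 1) * e1
  rw [hdval, hddval]
  have ha : a * x ^ 2 / x ^ 2 = a := mul_div_cancel_right₀ a ht0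
  have hs1 : 1 / x + 1 / (x - 1) + 1 / (x - x ^ 2) = 2 / x := by
    field_simp [hl0, hxm1, hxt']
    ring
  have hs2 : 1 / x ^ 2 + 1 / (x ^ 2 - 1) + 1 / (x - x ^ 2) =
      1 / x ^ 2 - 1 / (x * (x ^ 2 - 1)) := by
    field_simp [hl0, ht1', hxt']
    ring
  have hs3 : x * (x - 1) * (x - x ^ 2) / ((x ^ 2) ^ 2 * (x ^ 2 - 1) ^ 2) *
      (a - a * x ^ 2 / x ^ 2 + b * (x ^ 2 - 1) / (x - 1) ^ 2 +
        (1 / 2 - b) * (x ^ 2 * (x ^ 2 - 1)) / (x - x ^ 2) ^ 2) =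
      -(1 / (2 * (x ^ 2 * (x ^ 2 - 1)))) := by
    rw [ha]
    field_simp [hl0, hxm1, hxp1, ht1', hxt', sub_ne_zero, pow_ne_zero]
    ring
  rw [hs1, hs2, hs3]
  have t1 : (1:ℂ) / 2 * (2 / x) * (1 / (2 * x)) ^ 2 = 1 / (4 * x ^ 3) := by
    field_simp
    ring
  have t2 : ((1:ℂ) / x ^ 2 - 1 / (x * (x ^ 2 - 1))) * (1 / (2 * x)) =
      1 / (2 * x ^ 3) - 1 / (2 * (x ^ 2 * (x ^ 2 - 1))) := by
    rw [sub_mul, div_mul_div_comm, div_mul_div_comm, one_mul]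
    ring
  rw [t1, t2]
  ring
end

section
/- (Solution 2B of Table 1.) Let a, b ∈ ℂ. Let U ⊆ ℂ be a nonempty open set and λ : U → ℂ a twice differentiable function such that for every t ∈ U one has t ∉ {0,1}, λ(t) ∉ {0,1,t}, and λ(t)² − 2λ(t) + t = 0. Then λ is a solution of PVI_α with α = (a, b, a, b). -/
private lemma pvi_final_alg (L : ℂ) (hl0 : L ≠ 0) (hL1 : L - 1 ≠ 0) (h1L : (1:ℂ) - L ≠ 0)
    (h2L : (2:ℂ) - L ≠ 0) :
    2 * (1 / (2 * (1 - L))) / (2 * (1 - L)) ^ 2 =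
    (1 / 2) * (2 / (L - 1)) * (1 / (2 * (1 - L))) ^ 2
      - ((L ^ 2 - L - 1) / (L * (2 - L) * (L - 1) ^ 2)) * (1 / (2 * (1 - L)))
      + (-1 / (2 * (L * (2 - L)) * (L - 1) ^ 2)) := by
  have hv := mul_inv_cancel₀ hL1
  have hu := mul_inv_cancel₀ h1L
  have hw := mul_inv_cancel₀ hl0
  have hz := mul_inv_cancel₀ h2L
  simp only [div_eq_mul_inv, ← inv_pow, mul_inv]
  linear_combination
    ((1-L)⁻¹^3/4 - (1-L)⁻¹^2*((1-L)⁻¹-(L-1)⁻¹)/2) * hv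
    + ((1-L)⁻¹^2*(L-1)⁻¹/4 - (1-L)⁻¹*(L-1)⁻¹*((1-L)⁻¹-(L-1)⁻¹)/2
        - L⁻¹*(2-L)⁻¹*(L-1)⁻¹^2/2) * hu
    + (-((L-1)⁻¹^2*(1-L)⁻¹/2)*(2-L)*(2-L)⁻¹) * hw
    + (-((L-1)⁻¹^2*(1-L)⁻¹/2)) * hz

theorem stmt4 (a b : ℂ)
    (U : Set ℂ) (hU : U.Nonempty) (hUopen : IsOpen U) (l : ℂ → ℂ)
    (hdiff : ∀ t ∈ U, DifferentiableAt ℂ l t)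
    (hdiff2 : ∀ t ∈ U, DifferentiableAt ℂ (deriv l) t)
    (hreg : ∀ t ∈ U, t ≠ 0 ∧ t ≠ 1 ∧ l t ≠ 0 ∧ l t ≠ 1 ∧ l t ≠ t)
    (heq : ∀ t ∈ U, (l t) ^ 2 - 2 * l t + t = 0) :
    IsPVISolution ![a, b, a, b] U l := by
  -- first derivative formula
  have hd1 : ∀ t ∈ U, deriv l t = 1 / (2 * (1 - l t)) := by
    intro t ht
    have hF : HasDerivAt (fun x => (l x) ^ 2 - 2 * l x + x)
        (2 * l t ^ 1 * deriv l t - 2 * deriv l t + 1) t := by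
      have hd := (hdiff t ht).hasDerivAt
      exact ((hd.pow 2).sub (hd.const_mul 2)).add (hasDerivAt_id t)
    have hev : (fun x => (l x) ^ 2 - 2 * l x + x) =ᶠ[nhds t] (fun _ => (0 : ℂ)) := by
      filter_upwards [hUopen.mem_nhds ht] with x hx using heq x hx
    have h0 : 2 * l t ^ 1 * deriv l t - 2 * deriv l t + 1 = 0 := by
      have := hF.deriv
      rw [hev.deriv_eq] at this
      simpa using this.symm
    have hne : 2 * (1 - l t) ≠ 0 := by
      have : (1 : ℂ) - l t ≠ 0 := sub_ne_zero.mpr (Ne.symm (hreg t ht).2.2.2.1)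
      exact mul_ne_zero two_ne_zero this
    rw [eq_div_iff hne]
    linear_combination -h0
  -- second derivative formula
  have hd2 : ∀ t ∈ U, deriv (deriv l) t = 2 * deriv l t / (2 * (1 - l t)) ^ 2 := by
    intro t ht
    have hev : deriv l =ᶠ[nhds t] (fun x => (2 * (1 - l x))⁻¹) := by
      filter_upwards [hUopen.mem_nhds ht] with x hx
      rw [hd1 x hx, one_div]
    have hne : 2 * (1 - l t) ≠ 0 := by
      have hL1 : (1 : ℂ) - l t ≠ 0 := sub_ne_zero.mpr (Ne.symm (hreg t ht).2.2.2.1)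
      exact mul_ne_zero two_ne_zero hL1
    have hd := (hdiff t ht).hasDerivAt
    have hg := (((hasDerivAt_const t (1:ℂ)).sub hd).const_mul 2).inv hne
    have hg' : HasDerivAt (fun x => (2 * (1 - l x))⁻¹)
        (-(2 * (0 - deriv l t)) / (2 * (1 - l t)) ^ 2) t := hg
    rw [hev.deriv_eq, hg'.deriv]
    ring
  refine ⟨hdiff, hdiff2, hreg, ?_⟩
  intro t ht
  obtain ⟨ht0, ht1, hl0, hl1, hlt⟩ := hreg t ht
  have hd1t := hd1 t ht
  have hd2t := hd2 t ht
  have htval : t = 2 * l t - (l t) ^ 2 := by linear_combination heq t ht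
  set L := l t with hLdef
  have hL1 : L - 1 ≠ 0 := sub_ne_zero.mpr hl1
  have h1L : (1 : ℂ) - L ≠ 0 := sub_ne_zero.mpr (Ne.symm hl1)
  have hLt : L - t ≠ 0 := sub_ne_zero.mpr hlt
  have ht1' : t - 1 ≠ 0 := sub_ne_zero.mpr ht1
  rw [hd2t, hd1t]
  simp only [Matrix.cons_val_zero, Matrix.cons_val_one, Matrix.head_cons,
    Matrix.cons_val_two, Matrix.tail_cons, Matrix.cons_val_three]
  have h2L : (2 : ℂ) - L ≠ 0 := by
    intro h
    apply ht0
    rw [htval]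
    linear_combination L * h
  rw [htval]
  have e1 : 2 * L - L ^ 2 = L * (2 - L) := by ring
  have e2 : 2 * L - L ^ 2 - 1 = -((L - 1) ^ 2) := by ring
  have e3 : L - (2 * L - L ^ 2) = L * (L - 1) := by ring
  rw [e3, e2, e1]
  have h1 : 1 / L + 1 / (L - 1) + 1 / (L * (L - 1)) = 2 / (L - 1) := by
    field_simp; ring
  have h2 : 1 / (L * (2 - L)) + 1 / (-(L - 1) ^ 2) + 1 / (L * (L - 1)) =
      (L ^ 2 - L - 1) / (L * (2 - L) * (L - 1) ^ 2) := by
    field_simp; ring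
  have h3a : a - b * (L * (2 - L)) / L ^ 2 + a * (-(L - 1) ^ 2) / (L - 1) ^ 2
      + (1 / 2 - b) * (L * (2 - L) * (-(L - 1) ^ 2)) / (L * (L - 1)) ^ 2
      = -(2 - L) / (2 * L) := by
    field_simp; ring
  have h3b : (L * (L - 1) * (L * (L - 1))) / ((L * (2 - L)) ^ 2 * (-(L - 1) ^ 2) ^ 2) *
      (-(2 - L) / (2 * L)) = -1 / (2 * (L * (2 - L)) * (L - 1) ^ 2) := by
    rw [show ((-(L - 1) ^ 2) ^ 2 : ℂ) = (L - 1) ^ 4 by ring]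
    field_simp
  rw [h1, h2, h3a, h3b]
  exact pvi_final_alg L hl0 hL1 h1L h2L
end

section
/- (Solution 3D of Table 1.) Let a ∈ ℂ and let P(λ,t) = λ⁴ − 4tλ³ + 6tλ² − 4tλ + t². Let U ⊆ ℂ be a nonempty open set and λ : U → ℂ a twice differentiable function such that for every t ∈ U one has t ∉ {0,1}, λ(t) ∉ {0,1,t}, P(λ(t),t) = 0, and ∂P/∂λ(λ(t),t) ≠ 0. Then λ is a solution of PVI_α with α = (a, a, a, 9a). -/
open Polynomial

/-- The polynomial `P(λ, t)` of the table, as a polynomial in `λ` (the variable `X`)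
with coefficients depending on `t`. -/
noncomputable def P (t : ℂ) : Polynomial ℂ := X ^ 4 - C (4 * t) * X ^ 3 + C (6 * t) * X ^ 2 - C (4 * t) * X + C (t ^ 2)

set_option maxHeartbeats 2000000 in
theorem stmt8 (a : ℂ)
    (U : Set ℂ) (hU : U.Nonempty) (hUopen : IsOpen U) (l : ℂ → ℂ)
    (hdiff : ∀ t ∈ U, DifferentiableAt ℂ l t)
    (hdiff2 : ∀ t ∈ U, DifferentiableAt ℂ (deriv l) t)
    (hreg : ∀ t ∈ U, t ≠ 0 ∧ t ≠ 1 ∧ l t ≠ 0 ∧ l t ≠ 1 ∧ l t ≠ t)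
    (heq : ∀ t ∈ U, (P t).eval (l t) = 0)
    (hder : ∀ t ∈ U, (Polynomial.derivative (P t)).eval (l t) ≠ 0) :
    IsPVISolution ![a, a, a, 9 * a] U l := by
  have hP : ∀ s ∈ U, (l s)^4 - 4*s*(l s)^3 + 6*s*(l s)^2 - 4*s*(l s) + s^2 = 0 := by
    intro s hs
    have h := heq s hs
    simp only [P, eval_add, eval_sub, eval_mul, eval_pow, eval_C, eval_X] at h
    linear_combination h
  have hD : ∀ s ∈ U, 4*(l s)^3 - 12*s*(l s)^2 + 12*s*(l s) - 4*s ≠ 0 := by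
    intro s hs h
    apply hder s hs
    have : (Polynomial.derivative (P s)).eval (l s)
        = 4*(l s)^3 - 12*s*(l s)^2 + 12*s*(l s) - 4*s := by
      simp [P, derivative_pow]; ring
    rw [this]; exact h
  -- first-derivative relation from implicit differentiation
  have hE1 : ∀ s ∈ U, deriv l s * (4*(l s)^3 - 12*s*(l s)^2 + 12*s*(l s) - 4*s)
      = 4*(l s)^3 - 6*(l s)^2 + 4*(l s) - 2*s := by
    intro s hs
    have hl : HasDerivAt l (deriv l s) s := (hdiff s hs).hasDerivAt
    have hF : HasDerivAt (fun x => (l x)^4 - 4*x*(l x)^3 + 6*x*(l x)^2 - 4*x*(l x) + x^2)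
        ((4 * l s ^ 3 * deriv l s)
          - ((4 * 1) * (l s)^3 + (4 * s) * (3 * l s ^ 2 * deriv l s))
          + ((6 * 1) * (l s)^2 + (6 * s) * (2 * l s ^ 1 * deriv l s))
          - ((4 * 1) * (l s) + (4 * s) * deriv l s)
          + (2 * s ^ 1)) s := by
      exact ((((hl.pow 4).sub
          (((hasDerivAt_id s).const_mul (4:ℂ)).mul (hl.pow 3))).add
          (((hasDerivAt_id s).const_mul (6:ℂ)).mul (hl.pow 2))).sub
          (((hasDerivAt_id s).const_mul (4:ℂ)).mul hl)).add (hasDerivAt_pow 2 s)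
    have h0 : HasDerivAt (fun _ : ℂ => (0:ℂ)) ((4 * l s ^ 3 * deriv l s)
          - ((4 * 1) * (l s)^3 + (4 * s) * (3 * l s ^ 2 * deriv l s))
          + ((6 * 1) * (l s)^2 + (6 * s) * (2 * l s ^ 1 * deriv l s))
          - ((4 * 1) * (l s) + (4 * s) * deriv l s)
          + (2 * s ^ 1)) s := by
      refine hF.congr_of_eventuallyEq ?_
      filter_upwards [hUopen.mem_nhds hs] with x hx
      exact (hP x hx).symm
    have hE := h0.unique (hasDerivAt_const s 0)
    linear_combination hE
  unfold IsPVISolution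
  refine ⟨hdiff, hdiff2, hreg, ?_⟩
  intro t ht
  obtain ⟨ht0, ht1, hp0, hp1, hpt⟩ := hreg t ht
  have ht1' : t - 1 ≠ 0 := sub_ne_zero.mpr ht1
  have hp1' : l t - 1 ≠ 0 := sub_ne_zero.mpr hp1
  have hpt' : l t - t ≠ 0 := sub_ne_zero.mpr hpt
  have hDt := hD t ht
  -- second-derivative relation
  have hl : HasDerivAt l (deriv l t) t := (hdiff t ht).hasDerivAt
  have hl2 : HasDerivAt (deriv l) (deriv (deriv l) t) t := (hdiff2 t ht).hasDerivAt
  have hG : HasDerivAt (fun x => deriv l x * (4*(l x)^3 - 12*x*(l x)^2 + 12*x*(l x) - 4*x)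
        - (4*(l x)^3 - 6*(l x)^2 + 4*(l x) - 2*x))
      ((deriv (deriv l) t * (4*(l t)^3 - 12*t*(l t)^2 + 12*t*(l t) - 4*t)
        + deriv l t * ((4 * (3 * l t ^ 2 * deriv l t))
          - ((12 * 1) * (l t)^2 + (12 * t) * (2 * l t ^ 1 * deriv l t))
          + ((12 * 1) * (l t) + (12 * t) * deriv l t) - 4 * 1))
        - ((4 * (3 * l t ^ 2 * deriv l t)) - (6 * (2 * l t ^ 1 * deriv l t))
          + 4 * deriv l t - 2 * 1)) t := by
    exact (hl2.mul ((((hl.pow 3).const_mul (4:ℂ)).sub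
        (((hasDerivAt_id t).const_mul (12:ℂ)).mul (hl.pow 2))).add
        (((hasDerivAt_id t).const_mul (12:ℂ)).mul hl) |>.sub
        ((hasDerivAt_id t).const_mul (4:ℂ)))).sub
      ((((hl.pow 3).const_mul (4:ℂ)).sub ((hl.pow 2).const_mul (6:ℂ))).add
        (hl.const_mul (4:ℂ)) |>.sub ((hasDerivAt_id t).const_mul (2:ℂ)))
  have h0 : HasDerivAt (fun _ : ℂ => (0:ℂ))
      ((deriv (deriv l) t * (4*(l t)^3 - 12*t*(l t)^2 + 12*t*(l t) - 4*t)
        + deriv l t * ((4 * (3 * l t ^ 2 * deriv l t))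
          - ((12 * 1) * (l t)^2 + (12 * t) * (2 * l t ^ 1 * deriv l t))
          + ((12 * 1) * (l t) + (12 * t) * deriv l t) - 4 * 1))
        - ((4 * (3 * l t ^ 2 * deriv l t)) - (6 * (2 * l t ^ 1 * deriv l t))
          + 4 * deriv l t - 2 * 1)) t := by
    refine hG.congr_of_eventuallyEq ?_
    filter_upwards [hUopen.mem_nhds ht] with x hx
    exact (sub_eq_zero.mpr (hE1 x hx)).symm
  have hE2 := h0.unique (hasDerivAt_const t 0)
  have hq : deriv l t = (4*(l t)^3 - 6*(l t)^2 + 4*(l t) - 2*t)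
      / (4*(l t)^3 - 12*t*(l t)^2 + 12*t*(l t) - 4*t) :=
    (eq_div_iff hDt).mpr (hE1 t ht)
  have hr : deriv (deriv l) t =
      (((12 * (l t) ^ 2 * deriv l t) - (12 * (l t) * deriv l t) + 4 * deriv l t - 2)
        - deriv l t * ((12 * (l t) ^ 2 * deriv l t) - 12 * (l t)^2
            - (24 * t * (l t) * deriv l t) + 12 * (l t) + 12 * t * deriv l t - 4))
      / (4*(l t)^3 - 12*t*(l t)^2 + 12*t*(l t) - 4*t) := by
    rw [eq_div_iff hDt]
    linear_combination hE2
  rw [hr, hq]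
  have hPt := hP t ht
  simp only [Matrix.cons_val_zero, Matrix.cons_val_one, Matrix.head_cons,
    Matrix.cons_val_two, Matrix.tail_cons, Matrix.cons_val_three]
  have hDt' : l t * (l t * (l t * 4 - 12 * t) + 12 * t) - 4 * t ≠ 0 := by
    intro h; apply hDt; linear_combination h
  field_simp [ht0, ht1', hp0, hp1', hpt', hDt, hDt']
  linear_combination (((-128) * l t ^ 11 * a) + (896 * l t ^ 10 * t ^ 1 * a) + (256 * l t ^ 10 * a) + ((-1152) * l t ^ 9 * t ^ 2 * a) + ((-64) * l t ^ 9 * t ^ 2) + ((-3328) * l t ^ 9 * t ^ 1 * a) + (64 * l t ^ 9 * t ^ 1) + ((-3456) * l t ^ 8 * t ^ 3 * a) + (576 * l t ^ 8 * t ^ 3) + (10368 * l t ^ 8 * t ^ 2 * a) + ((-576) * l t ^ 8 * t ^ 2) + (2688 * l t ^ 8 * t ^ 1 * a) + (6912 * l t ^ 7 * t ^ 4 * a) + ((-896) * l t ^ 7 * t ^ 4) + ((-512) * l t ^ 7 * t ^ 3) + ((-17664) * l t ^ 7 * t ^ 2 * a) + (1664 * l t ^ 7 * t ^ 2) + ((-768)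 * l t ^ 7 * t ^ 1 * a) + ((-256) * l t ^ 7 * t ^ 1) + ((-24192) * l t ^ 6 * t ^ 4 * a) + (3136 * l t ^ 6 * t ^ 4) + (16128 * l t ^ 6 * t ^ 3 * a) + ((-2048) * l t ^ 6 * t ^ 3) + (13440 * l t ^ 6 * t ^ 2 * a) + ((-1408) * l t ^ 6 * t ^ 2) + (320 * l t ^ 6 * t ^ 1) + (38016 * l t ^ 5 * t ^ 4 * a) + ((-4688) * l t ^ 5 * t ^ 4) + ((-27648) * l t ^ 5 * t ^ 3 * a) + (4768 * l t ^ 5 * t ^ 3) + ((-4992) * l t ^ 5 * t ^ 2 * a) + (48 * l t ^ 5 * t ^ 2) + ((-128) * l t ^ 5 * t ^ 1) + (464 * l t ^ 4 * t ^ 5) + ((-34560) * l t ^ 4 * t ^ 4 * a) + (2720 * l t ^ 4 * t ^ 4) + (22272 * l t ^ 4 * t ^ 3 * a) + ((-3568) * l t ^ 4 * t ^ 3) + (768 * l t ^ 4 * t ^ 2 * a) + (384 * l t ^ 4 * t ^ 2) + ((-288) * l t ^ 3 * t ^ 6) + ((-64) * l t ^ 3 * t ^ 5) + (19584 * l t ^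 3 * t ^ 4 * a) + ((-608) * l t ^ 3 * t ^ 4) + ((-9984) * l t ^ 3 * t ^ 3 * a) + (1024 * l t ^ 3 * t ^ 3) + ((-64) * l t ^ 3 * t ^ 2) + (432 * l t ^ 2 * t ^ 6) + ((-624) * l t ^ 2 * t ^ 5) + ((-6912) * l t ^ 2 * t ^ 4 * a) + (400 * l t ^ 2 * t ^ 4) + (2432 * l t ^ 2 * t ^ 3 * a) + ((-208) * l t ^ 2 * t ^ 3) + ((-176) * l t ^ 1 * t ^ 6) + (320 * l t ^ 1 * t ^ 5) + (1408 * l t ^ 1 * t ^ 4 * a) + ((-176) * l t ^ 1 * t ^ 4) + ((-256) * l t ^ 1 * t ^ 3 * a) + (32 * l t ^ 1 * t ^ 3) + (16 * t ^ 6) + ((-32) * t ^ 5) + ((-128) * t ^ 4 * a) + (16 * t ^ 4)) * hPt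
end

section
/- Let U ⊆ ℂ be a nonempty open set, let g₂, g₃ : U → ℂ be differentiable functions, and define Δ = g₂³ − 27g₃² and δ = 3g₃·g₂′ − 2g₂·g₃′ on U. Let x₁, x₂ : U → ℂ be differentiable functions such that for every z ∈ U: 4x₁(z)³ − g₂(z)x₁(z) − g₃(z) = 0, 4x₂(z)³ − g₂(z)x₂(z) − g₃(z) = 0, x₁(z) ≠ x₂(z), and Δ(z) ≠ 0. Set η₁ = x₁ − x₂ and η₂ = x₁² − x₂². Then η₁, η₂ satisfy the Picard–Fuchs system: for every z ∈ U, Δ(z)·η₁′(z) = (Δ′(z)/6)·η₁(z) − 3δ(z)·η₂(z) and Δ(z)·η₂′(z) = −(g₂(z)·δ(z)/2)·η₁(z) + (Δ′(z)/3)·η₂(z). -/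
theorem stmt19 (U : Set ℂ) (hU : U.Nonempty) (hUopen : IsOpen U)
    (g₂ g₃ x₁ x₂ : ℂ → ℂ)
    (hg₂ : ∀ z ∈ U, DifferentiableAt ℂ g₂ z)
    (hg₃ : ∀ z ∈ U, DifferentiableAt ℂ g₃ z)
    (hx₁ : ∀ z ∈ U, DifferentiableAt ℂ x₁ z)
    (hx₂ : ∀ z ∈ U, DifferentiableAt ℂ x₂ z)
    (hroot₁ : ∀ z ∈ U, 4 * x₁ z ^ 3 - g₂ z * x₁ z - g₃ z = 0)
    (hroot₂ : ∀ z ∈ U, 4 * x₂ z ^ 3 - g₂ z * x₂ z - g₃ z = 0)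
    (hne : ∀ z ∈ U, x₁ z ≠ x₂ z)
    (hΔ : ∀ z ∈ U, g₂ z ^ 3 - 27 * g₃ z ^ 2 ≠ 0) :
    ∀ z ∈ U,
      (g₂ z ^ 3 - 27 * g₃ z ^ 2) * deriv (fun w => x₁ w - x₂ w) z =
          deriv (fun w => g₂ w ^ 3 - 27 * g₃ w ^ 2) z / 6 * (x₁ z - x₂ z)
            - 3 * (3 * g₃ z * deriv g₂ z - 2 * g₂ z * deriv g₃ z) * (x₁ z ^ 2 - x₂ z ^ 2) ∧
      (g₂ z ^ 3 - 27 * g₃ z ^ 2) * deriv (fun w => x₁ w ^ 2 - x₂ w ^ 2) z =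
          -(g₂ z * (3 * g₃ z * deriv g₂ z - 2 * g₂ z * deriv g₃ z) / 2) * (x₁ z - x₂ z)
            + deriv (fun w => g₂ w ^ 3 - 27 * g₃ w ^ 2) z / 3 * (x₁ z ^ 2 - x₂ z ^ 2) := by
  intro z hz
  have hab : x₁ z - x₂ z ≠ 0 := sub_ne_zero.mpr (hne z hz)
  -- g₂ and g₃ in terms of the roots
  have hg2val : g₂ z = 4 * (x₁ z ^ 2 + x₁ z * x₂ z + x₂ z ^ 2) := by
    have key : (x₁ z - x₂ z) * (4 * (x₁ z ^ 2 + x₁ z * x₂ z + x₂ z ^ 2) - g₂ z) = 0 := by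
      linear_combination (hroot₁ z hz) - (hroot₂ z hz)
    rcases mul_eq_zero.mp key with h | h
    · exact absurd h hab
    · exact (sub_eq_zero.mp h).symm
  have hg3val : g₃ z = -(4 * (x₁ z * x₂ z * (x₁ z + x₂ z))) := by
    linear_combination (-1 : ℂ) * (hroot₁ z hz) - x₁ z * hg2val
  -- differentiate the root equations
  have H1 : HasDerivAt (fun w => 4 * x₁ w ^ 3 - g₂ w * x₁ w - g₃ w)
      (4 * (3 * x₁ z ^ 2 * deriv x₁ z) - (deriv g₂ z * x₁ z + g₂ z * deriv x₁ z)
        - deriv g₃ z) z := by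
    have h1 := (hx₁ z hz).hasDerivAt
    have h2 := (hg₂ z hz).hasDerivAt
    have h3 := (hg₃ z hz).hasDerivAt
    exact (((h1.pow 3).const_mul (4 : ℂ)).sub (h2.mul h1)).sub h3
  have H2 : HasDerivAt (fun w => 4 * x₂ w ^ 3 - g₂ w * x₂ w - g₃ w)
      (4 * (3 * x₂ z ^ 2 * deriv x₂ z) - (deriv g₂ z * x₂ z + g₂ z * deriv x₂ z)
        - deriv g₃ z) z := by
    have h1 := (hx₂ z hz).hasDerivAt
    have h2 := (hg₂ z hz).hasDerivAt
    have h3 := (hg₃ z hz).hasDerivAt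
    exact (((h1.pow 3).const_mul (4 : ℂ)).sub (h2.mul h1)).sub h3
  have hev1 : (fun w => 4 * x₁ w ^ 3 - g₂ w * x₁ w - g₃ w) =ᶠ[nhds z] (fun _ => (0 : ℂ)) := by
    filter_upwards [hUopen.mem_nhds hz] with w hw using hroot₁ w hw
  have hev2 : (fun w => 4 * x₂ w ^ 3 - g₂ w * x₂ w - g₃ w) =ᶠ[nhds z] (fun _ => (0 : ℂ)) := by
    filter_upwards [hUopen.mem_nhds hz] with w hw using hroot₂ w hw
  have heq1 : 4 * (3 * x₁ z ^ 2 * deriv x₁ z) - (deriv g₂ z * x₁ z + g₂ z * deriv x₁ z)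
      - deriv g₃ z = 0 := by
    rw [← H1.deriv, hev1.deriv_eq, deriv_const]
  have heq2 : 4 * (3 * x₂ z ^ 2 * deriv x₂ z) - (deriv g₂ z * x₂ z + g₂ z * deriv x₂ z)
      - deriv g₃ z = 0 := by
    rw [← H2.deriv, hev2.deriv_eq, deriv_const]
  -- solve for deriv g₂ and deriv g₃
  have hAval : deriv g₂ z =
      4 * ((2 * x₁ z + x₂ z) * deriv x₁ z + (x₁ z + 2 * x₂ z) * deriv x₂ z) := by
    have key : (x₁ z - x₂ z) * deriv g₂ z =
        (x₁ z - x₂ z) * (4 * ((2 * x₁ z + x₂ z) * deriv x₁ z + (x₁ z + 2 * x₂ z) * deriv x₂ z)) := by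
      linear_combination -heq1 + heq2 - (deriv x₁ z - deriv x₂ z) * hg2val
    exact mul_left_cancel₀ hab key
  have hBval : deriv g₃ z =
      -(4 * x₂ z * (2 * x₁ z + x₂ z) * deriv x₁ z)
      - 4 * x₁ z * (x₁ z + 2 * x₂ z) * deriv x₂ z := by
    linear_combination -heq1 - x₁ z * hAval - deriv x₁ z * hg2val
  -- compute the derivatives appearing in the goal
  have hd1 : deriv (fun w => x₁ w - x₂ w) z = deriv x₁ z - deriv x₂ z :=
    ((hx₁ z hz).hasDerivAt.sub (hx₂ z hz).hasDerivAt).deriv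
  have hd2 : deriv (fun w => x₁ w ^ 2 - x₂ w ^ 2) z =
      2 * x₁ z * deriv x₁ z - 2 * x₂ z * deriv x₂ z := by
    have := ((hx₁ z hz).hasDerivAt.pow 2).sub ((hx₂ z hz).hasDerivAt.pow 2)
    rw [show (fun w => x₁ w ^ 2 - x₂ w ^ 2) = x₁ ^ 2 - x₂ ^ 2 from rfl, this.deriv]
    ring
  have hd3 : deriv (fun w => g₂ w ^ 3 - 27 * g₃ w ^ 2) z =
      3 * g₂ z ^ 2 * deriv g₂ z - 27 * (2 * g₃ z * deriv g₃ z) := by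
    have := ((hg₂ z hz).hasDerivAt.pow 3).sub (((hg₃ z hz).hasDerivAt.pow 2).const_mul (27 : ℂ))
    rw [show (fun w => g₂ w ^ 3 - 27 * g₃ w ^ 2) = (g₂ ^ 3 - fun y => 27 * (g₃ ^ 2) y) from rfl, this.deriv]
    ring
  constructor
  · rw [hd1, hd3, hAval, hBval, hg2val, hg3val]
    ring
  · rw [hd2, hd3, hAval, hBval, hg2val, hg3val]
    ring
end
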